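/- Let A = ⊕_{i=1}^m J_{λ_i, n_i} be a direct sum of Jordan blocks with pairwise distinct eigenvalues λ_1, …, λ_m over a field F, with total size n = ∑ n_i. Then for every monic polynomial q(t) of degree n over F, there exists a matrix B of rank at most one such that the characteristic polynomial of A + B equals q(t). -/

import Mathlib

open Polynomial Matrix

/-- The `r × r` upper-triangular Jordan block with eigenvalue `μ`. -/
def jordanBlock {F : Type*} [Field F] (μ : F) (r : ℕ) : Matrix (Fin r) (Fin r) F :=
  Matrix.of fun i j => if i = j then μ else if (i : ℕ) + 1 = (j : ℕ) then 1 else 0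

lemma det_rank_one_field {K : Type*} [Field K] {n : Type*} [Fintype n] [DecidableEq n]
    (M : Matrix n n K) (hM : M.det ≠ 0) (u v w : n → K) (hw : M *ᵥ w = M.det • u) :
    (M + Matrix.replicateCol (Fin 1) u * Matrix.replicateRow (Fin 1) v).det = M.det + v ⬝ᵥ w := by
  have hU : IsUnit M.det := isUnit_iff_ne_zero.mpr hM
  rw [Matrix.det_add_mul _ _ hU]
  have hw2 : w = M.det • (M⁻¹ *ᵥ u) := by
    calc w = (M⁻¹ * M) *ᵥ w := by rw [Matrix.nonsing_inv_mul M hU, Matrix.one_mulVec]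
    _ = M⁻¹ *ᵥ (M *ᵥ w) := by rw [Matrix.mulVec_mulVec]
    _ = M⁻¹ *ᵥ (M.det • u) := by rw [hw]
    _ = M.det • (M⁻¹ *ᵥ u) := Matrix.mulVec_smul _ _ _
  have h1 : Matrix.replicateRow (Fin 1) v * M⁻¹ * Matrix.replicateCol (Fin 1) u
      = Matrix.of (fun (_ _ : Fin 1) => v ⬝ᵥ (M⁻¹ *ᵥ u)) := by
    rw [Matrix.mul_assoc, ← Matrix.replicateCol_mulVec]
    ext i j
    simp [Matrix.replicateRow_mul_replicateCol_apply]
  rw [h1]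
  simp only [Matrix.det_unique, Matrix.add_apply, Matrix.one_apply_eq, Matrix.of_apply]
  rw [hw2, dotProduct_smul, smul_eq_mul]
  ring

lemma det_rank_one_domain {R : Type*} [CommRing R] [IsDomain R] {n : Type*} [Fintype n]
    [DecidableEq n] (M : Matrix n n R) (hM : M.det ≠ 0) (u v w : n → R)
    (hw : M *ᵥ w = M.det • u) :
    (M + Matrix.replicateCol (Fin 1) u * Matrix.replicateRow (Fin 1) v).det = M.det + v ⬝ᵥ w := by
  let K := FractionRing R
  have hinj : Function.Injective (algebraMap R K) := IsFractionRing.injective R K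
  apply hinj
  set φ := algebraMap R K with hφ
  have hdet : ∀ N : Matrix n n R, φ N.det = (N.map φ).det := fun N => RingHom.map_det φ N
  have hmap : (M + Matrix.replicateCol (Fin 1) u * Matrix.replicateRow (Fin 1) v).map φ
      = M.map φ + Matrix.replicateCol (Fin 1) (φ ∘ u) * Matrix.replicateRow (Fin 1) (φ ∘ v) := by
    ext i j
    simp [Matrix.mul_apply, Matrix.map_apply, map_add, _root_.map_mul]
  have hMdet : (M.map φ).det ≠ 0 := by
    rw [← hdet]
    simpa using fun h => hM (hinj (by simpa using h))
  have hw' : (M.map φ) *ᵥ (φ ∘ w) = (M.map φ).det • (φ ∘ u) := by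
    funext p
    have : ((M.map φ) *ᵥ (φ ∘ w)) p = φ ((M *ᵥ w) p) := by
      simp [Matrix.mulVec, dotProduct, map_sum]
    rw [this, hw]
    simp [Pi.smul_apply, smul_eq_mul, _root_.map_mul, hdet M]
  have key := det_rank_one_field (M.map φ) hMdet (φ ∘ u) (φ ∘ v) (φ ∘ w) hw'
  rw [map_add (φ : R →+* K), hdet, hmap, key, hdet]
  congr 1
  simp [dotProduct, map_sum]

lemma partial_fraction_sum {F : Type*} [Field F] {ι : Type*} [DecidableEq ι] (s : Finset ι)
    (g : ι → Polynomial F) (hg : ∀ i ∈ s, (g i).Monic)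
    (hcop : Set.Pairwise ↑s fun i j => IsCoprime (g i) (g j)) :
    ∀ f : Polynomial F, f.degree < (∏ i ∈ s, g i).degree →
    ∃ r : ι → Polynomial F, (∀ i ∈ s, (r i).degree < (g i).degree) ∧
      f = ∑ i ∈ s, r i * ∏ j ∈ s.erase i, g j := by
  classical
  induction s using Finset.induction_on with
  | empty =>
    intro f hf
    refine ⟨fun _ => 0, by simp, ?_⟩
    simp only [Finset.prod_empty, Polynomial.degree_one] at hf
    simp [Polynomial.degree_eq_bot.mp (Nat.WithBot.lt_zero_iff.mp hf)]
  | @insert a s ha IH =>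
    intro f hf
    have hga : (g a).Monic := hg a (s.mem_insert_self a)
    have hG : (∏ i ∈ s, g i).Monic :=
      Polynomial.monic_prod_of_monic _ _ fun i hi => hg i (Finset.mem_insert_of_mem hi)
    have hco : IsCoprime (g a) (∏ i ∈ s, g i) := by
      apply IsCoprime.prod_right
      intro i hi
      exact hcop (Finset.mem_coe.2 (s.mem_insert_self a))
        (Finset.mem_coe.2 (Finset.mem_insert_of_mem hi)) (by rintro rfl; exact ha hi)
    obtain ⟨c, d, hcd⟩ := hco
    set G := ∏ i ∈ s, g i with hGdef
    set ra := (f * d) %ₘ (g a) with hra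
    have hradeg : ra.degree < (g a).degree := Polynomial.degree_modByMonic_lt _ hga
    have hkey : f - ra * G = g a * (f * c + ((f * d) /ₘ (g a)) * G) := by
      have hmod := Polynomial.modByMonic_add_div (f * d) (g a)
      calc f - ra * G = f * (c * g a + d * G) - ra * G := by rw [hcd]; ring
      _ = g a * (f * c + ((f * d) /ₘ (g a)) * G) := by
        have hmod := Polynomial.modByMonic_add_div (f * d) (g a)
        linear_combination (-G) * hmod
    set h := f * c + ((f * d) /ₘ (g a)) * G with hh
    have hfeq : f = ra * G + g a * h := by rw [← hkey]; ring
    have hprodins : (∏ i ∈ insert a s, g i) = g a * G := Finset.prod_insert ha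
    have hdegins : (∏ i ∈ insert a s, g i).degree = (g a).degree + G.degree := by
      rw [hprodins, Polynomial.degree_mul]
    have hsub : (f - ra * G).degree < (g a).degree + G.degree := by
      apply lt_of_le_of_lt (Polynomial.degree_sub_le _ _)
      apply max_lt
      · rw [← hdegins]; exact hf
      · apply lt_of_le_of_lt (Polynomial.degree_mul_le _ _)
        exact WithBot.add_lt_add_right (by simp [Polynomial.degree_eq_bot, hG.ne_zero]) hradeg
    have hhdeg : h.degree < G.degree := by
      have h1 : (g a * h).degree < (g a).degree + G.degree := by rw [← hkey]; exact hsub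
      rw [Polynomial.degree_mul] at h1
      exact (WithBot.add_lt_add_iff_left
        (by simp [Polynomial.degree_eq_bot, hga.ne_zero])).mp h1
    obtain ⟨r, hrdeg, hrsum⟩ := IH (fun i hi => hg i (Finset.mem_insert_of_mem hi))
      (Set.Pairwise.mono (Finset.coe_subset.2 fun i hi => Finset.mem_insert_of_mem hi) hcop)
      h hhdeg
    refine ⟨fun i => if i = a then ra else r i, ?_, ?_⟩
    · intro i hi
      rcases Finset.mem_insert.mp hi with rfl | hi
      · simpa using hradeg
      · have : i ≠ a := fun hh => ha (hh ▸ hi)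
        simpa [this] using hrdeg i hi
    · rw [Finset.sum_insert ha]
      have h1 : (insert a s).erase a = s := Finset.erase_insert ha
      have h2 : ∀ i ∈ s, (insert a s).erase i = insert a (s.erase i) := by
        intro i hi
        rw [Finset.erase_insert_of_ne (show a ≠ i from fun hh => ha (hh.symm ▸ hi))]
      rw [hfeq, h1]
      simp only [if_pos rfl]
      congr 1
      rw [hrsum, Finset.mul_sum]
      apply Finset.sum_congr rfl
      intro i hi
      have : i ≠ a := by rintro rfl; exact ha hi
      rw [if_neg this, h2 i hi, Finset.prod_insert (fun hmem => ha (Finset.mem_of_mem_erase hmem))]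
      ring

lemma charpoly_jordanBlock {F : Type*} [Field F] (μ : F) (r : ℕ) :
    (jordanBlock μ r).charpoly = (X - C μ) ^ r := by
  rw [Matrix.charpoly_of_upperTriangular _ ?ht]
  case ht =>
    intro i j hij
    simp only [jordanBlock, Matrix.of_apply, id_eq] at hij ⊢
    rw [if_neg (by omega), if_neg (by omega)]
  have hd : ∀ i : Fin r, jordanBlock μ r i i = μ := by
    intro i; simp [jordanBlock]
  simp [hd, Finset.prod_const, Finset.card_univ]

def blockEquiv {m : ℕ} (nn : Fin m → ℕ) (a : Fin m) :
    {p : Σ i, Fin (nn i) // p.1 = a} ≃ Fin (nn a) where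
  toFun p := Fin.cast (congrArg nn p.2) p.1.2
  invFun b := ⟨⟨a, b⟩, rfl⟩
  left_inv := by rintro ⟨⟨i, b⟩, rfl⟩; rfl
  right_inv b := rfl

set_option maxHeartbeats 1000000 in
lemma charpoly_blockDiag {F : Type*} [Field F] {m : ℕ} (nn : Fin m → ℕ) (lam : Fin m → F) :
    (Matrix.blockDiagonal' fun i => jordanBlock (lam i) (nn i)).charpoly
      = ∏ i, (X - C (lam i)) ^ (nn i) := by
  set A := Matrix.blockDiagonal' fun i => jordanBlock (lam i) (nn i) with hA
  have hbt : A.BlockTriangular Sigma.fst := Matrix.blockTriangular_blockDiagonal' _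
  rw [hbt.charpoly]
  have hsq : ∀ a : Fin m, (A.toSquareBlock Sigma.fst a).charpoly = (X - C (lam a)) ^ (nn a) := by
    intro a
    have he : Matrix.reindex (blockEquiv nn a) (blockEquiv nn a) (A.toSquareBlock Sigma.fst a)
        = jordanBlock (lam a) (nn a) := by
      ext i j
      show A.toSquareBlock Sigma.fst a ((blockEquiv nn a).symm i) ((blockEquiv nn a).symm j) = _
      show A ⟨a, i⟩ ⟨a, j⟩ = _
      rw [hA, Matrix.blockDiagonal'_apply_eq]
    rw [← Matrix.charpoly_reindex (blockEquiv nn a) (A.toSquareBlock Sigma.fst a), he,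
      charpoly_jordanBlock]
  have h2 : ∏ a ∈ Finset.univ.image (Sigma.fst : (Σ i, Fin (nn i)) → Fin m),
      ((X : Polynomial F) - C (lam a)) ^ (nn a) = ∏ a, ((X : Polynomial F) - C (lam a)) ^ (nn a) := by
    apply Finset.prod_subset (Finset.subset_univ _)
    intro a _ hma
    have hnn : nn a = 0 := by
      by_contra hne
      exact hma (Finset.mem_image.mpr ⟨⟨a, ⟨0, Nat.pos_of_ne_zero hne⟩⟩, Finset.mem_univ _, rfl⟩)
    simp [hnn]
  refine Eq.trans (b := ∏ a ∈ Finset.univ.image (Sigma.fst : (Σ i, Fin (nn i)) → Fin m),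
      ((X : Polynomial F) - C (lam a)) ^ (nn a)) (Finset.prod_congr ?_ (fun a _ => ?_)) h2
  · convert rfl using 2
  · convert hsq a using 2

lemma mulVec_charmatrix_blockDiag {F : Type*} [Field F] {m : ℕ} (nn : Fin m → ℕ)
    (lam : Fin m → F) :
    (Matrix.charmatrix (Matrix.blockDiagonal' fun i => jordanBlock (lam i) (nn i))) *ᵥ
      (fun p : Σ i, Fin (nn i) => ((X : Polynomial F) - C (lam p.1)) ^ (p.2 : ℕ) *
        ∏ k ∈ Finset.univ.erase p.1, (X - C (lam k)) ^ (nn k))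
    = fun p => (∏ k, ((X : Polynomial F) - C (lam k)) ^ (nn k)) *
        (if (p.2 : ℕ) + 1 = nn p.1 then 1 else 0) := by
  classical
  set A := Matrix.blockDiagonal' fun i => jordanBlock (lam i) (nn i) with hA
  set w : (Σ i, Fin (nn i)) → Polynomial F := fun p =>
    ((X : Polynomial F) - C (lam p.1)) ^ (p.2 : ℕ) *
      ∏ k ∈ Finset.univ.erase p.1, (X - C (lam k)) ^ (nn k) with hw
  funext p
  obtain ⟨i, a⟩ := p
  show ∑ q, Matrix.charmatrix A ⟨i, a⟩ q * w q = _
  rw [← Finset.univ_sigma_univ, Finset.sum_sigma]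
  rw [Finset.sum_eq_single i ?hne ?hmem]
  case hne =>
    intro k _ hk
    apply Finset.sum_eq_zero
    intro b _
    have h1 : (⟨i, a⟩ : Σ j, Fin (nn j)) ≠ ⟨k, b⟩ := by
      intro h; exact hk (congrArg Sigma.fst h).symm
    rw [Matrix.charmatrix_apply_ne _ _ _ h1, hA, Matrix.blockDiagonal'_apply_ne _ _ _
      (fun h => hk h.symm)]
    simp
  case hmem => intro h; exact absurd (Finset.mem_univ i) h
  -- now the single block sum
  rw [← Finset.add_sum_erase _ _ (Finset.mem_univ a)]
  have hdiag : Matrix.charmatrix A ⟨i, a⟩ ⟨i, a⟩ = X - C (lam i) := by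
    rw [Matrix.charmatrix_apply_eq, hA, Matrix.blockDiagonal'_apply_eq]
    simp [jordanBlock]
  rw [hdiag]
  have hwa : w ⟨i, a⟩ = ((X : Polynomial F) - C (lam i)) ^ (a : ℕ) *
      ∏ k ∈ Finset.univ.erase i, (X - C (lam k)) ^ (nn k) := rfl
  by_cases hlt : (a : ℕ) + 1 < nn i
  · -- not the last row of the block
    have hmemb : (⟨(a : ℕ) + 1, hlt⟩ : Fin (nn i)) ∈ Finset.univ.erase a := by
      apply Finset.mem_erase.mpr
      exact ⟨by simp [Fin.ext_iff], Finset.mem_univ _⟩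
    rw [Finset.sum_eq_single_of_mem _ hmemb ?hz]
    case hz =>
      intro b _ hb
      have hba : b ≠ a := by
        rcases Finset.mem_erase.mp ‹b ∈ Finset.univ.erase a› with ⟨h, _⟩
        exact h
      have h1 : (⟨i, a⟩ : Σ j, Fin (nn j)) ≠ ⟨i, b⟩ := by
        simp [Sigma.mk.inj_iff]
        exact fun h => hba (by simpa [Fin.ext_iff] using h.symm)
      rw [Matrix.charmatrix_apply_ne _ _ _ h1, hA, Matrix.blockDiagonal'_apply_eq]
      have : jordanBlock (lam i) (nn i) a b = 0 := by
        simp only [jordanBlock, Matrix.of_apply]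
        rw [if_neg (fun h => hba h.symm), if_neg (by
          intro h
          exact hb (by simp [Fin.ext_iff, ← h]))]
      rw [this]
      simp
    have h1 : (⟨i, a⟩ : Σ j, Fin (nn j)) ≠ ⟨i, ⟨(a : ℕ) + 1, hlt⟩⟩ := by
      simp [Sigma.mk.inj_iff]
      intro h
      have := congrArg Fin.val h
      simp at this
    rw [Matrix.charmatrix_apply_ne _ _ _ h1, hA, Matrix.blockDiagonal'_apply_eq]
    have hjb : jordanBlock (lam i) (nn i) a ⟨(a : ℕ) + 1, hlt⟩ = 1 := by
      simp only [jordanBlock, Matrix.of_apply]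
      rw [if_neg (by simp [Fin.ext_iff])]
      simp
    rw [hjb]
    rw [if_neg (show ¬((a : ℕ) + 1 = nn i) from by omega)]
    have hwb : w ⟨i, ⟨(a : ℕ) + 1, hlt⟩⟩ = ((X : Polynomial F) - C (lam i)) ^ ((a : ℕ) + 1) *
        ∏ k ∈ Finset.univ.erase i, (X - C (lam k)) ^ (nn k) := rfl
    rw [hwa, hwb]
    simp only [_root_.map_one, mul_zero]
    ring
  · -- last row of the block
    have hlast : (a : ℕ) + 1 = nn i := by have := a.isLt; omega
    rw [Finset.sum_eq_zero ?hz2]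
    case hz2 =>
      intro b hb
      have hba : b ≠ a := (Finset.mem_erase.mp hb).1
      have h1 : (⟨i, a⟩ : Σ j, Fin (nn j)) ≠ ⟨i, b⟩ := by
        simp [Sigma.mk.inj_iff]
        exact fun h => hba (by simpa [Fin.ext_iff] using h.symm)
      rw [Matrix.charmatrix_apply_ne _ _ _ h1, hA, Matrix.blockDiagonal'_apply_eq]
      have : jordanBlock (lam i) (nn i) a b = 0 := by
        simp only [jordanBlock, Matrix.of_apply]
        rw [if_neg (fun h => hba h.symm), if_neg (by
          intro h
          have := b.isLt
          omega)]
      rw [this]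
      simp
    rw [hwa, if_pos hlast, add_zero, mul_one]
    rw [← mul_assoc, ← pow_succ', hlast]
    exact Finset.mul_prod_erase Finset.univ (fun k => ((X : Polynomial F) - C (lam k)) ^ nn k) (Finset.mem_univ i)

lemma charmatrix_add_rank_one {R : Type*} [CommRing R] {n : Type*} [Fintype n] [DecidableEq n]
    (M : Matrix n n R) (u v : n → R) :
    Matrix.charmatrix (M + Matrix.replicateCol (Fin 1) u * Matrix.replicateRow (Fin 1) v)
      = Matrix.charmatrix M
        + Matrix.replicateCol (Fin 1) (fun p => -C (u p)) * Matrix.replicateRow (Fin 1) (fun p => C (v p)) := by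
  ext p q
  simp only [Matrix.charmatrix_apply, Matrix.add_apply, Matrix.mul_apply, Matrix.replicateCol_apply,
    Matrix.replicateRow_apply, Finset.univ_unique, Finset.sum_singleton, map_add, _root_.map_mul,
    map_neg]
  ring

theorem stmt_10 (F : Type*) [Field F] (m : ℕ) (nn : Fin m → ℕ)
    (lam : Fin m → F) (hlam : Function.Injective lam)
    (A : Matrix (Σ i, Fin (nn i)) (Σ i, Fin (nn i)) F)
    (hA : A = Matrix.blockDiagonal' fun i => jordanBlock (lam i) (nn i))
    (q : Polynomial F) (hq : q.Monic) (hdeg : q.natDegree = ∑ i, nn i) :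
    ∃ B : Matrix (Σ i, Fin (nn i)) (Σ i, Fin (nn i)) F,
      B.rank ≤ 1 ∧ (A + B).charpoly = q := by
  classical
  have hchiM : ∀ k, (((X : Polynomial F) - C (lam k)) ^ (nn k)).Monic :=
    fun k => (Polynomial.monic_X_sub_C _).pow _
  have hprodM : (∏ k, ((X : Polynomial F) - C (lam k)) ^ (nn k)).Monic :=
    Polynomial.monic_prod_of_monic _ _ fun k _ => hchiM k
  have hndeg : (∏ k, ((X : Polynomial F) - C (lam k)) ^ (nn k)).natDegree = ∑ i, nn i := by
    rw [Polynomial.natDegree_prod _ _ (fun k _ => (hchiM k).ne_zero)]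
    exact Finset.sum_congr rfl fun k _ => by
      rw [Polynomial.natDegree_pow, Polynomial.natDegree_X_sub_C, mul_one]
  have hcharA : A.charpoly = ∏ k, ((X : Polynomial F) - C (lam k)) ^ (nn k) := by
    rw [hA]; exact charpoly_blockDiag nn lam
  have hdegf : ((∏ k, ((X : Polynomial F) - C (lam k)) ^ (nn k)) - q).degree
      < (∏ k, ((X : Polynomial F) - C (lam k)) ^ (nn k)).degree := by
    apply Polynomial.degree_sub_lt ?_ hprodM.ne_zero ?_
    · rw [Polynomial.degree_eq_natDegree hprodM.ne_zero,
        Polynomial.degree_eq_natDegree hq.ne_zero, hndeg, hdeg]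
    · rw [hprodM.leadingCoeff, hq.leadingCoeff]
  have hcop : Set.Pairwise ↑(Finset.univ : Finset (Fin m))
      fun i j => IsCoprime (((X : Polynomial F) - C (lam i)) ^ (nn i))
        (((X : Polynomial F) - C (lam j)) ^ (nn j)) := by
    intro i _ j _ hij
    exact (Polynomial.pairwise_coprime_X_sub_C hlam hij).pow
  obtain ⟨r, hrdeg, hrsum⟩ := partial_fraction_sum Finset.univ _ (fun k _ => hchiM k) hcop
    ((∏ k, ((X : Polynomial F) - C (lam k)) ^ (nn k)) - q) hdegf
  set c : (Σ i, Fin (nn i)) → F :=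
    fun p => (Polynomial.taylor (lam p.1) (r p.1)).coeff (p.2 : ℕ) with hc
  set u : (Σ i, Fin (nn i)) → F :=
    fun p => if (p.2 : ℕ) + 1 = nn p.1 then 1 else 0 with hu
  refine ⟨Matrix.replicateCol (Fin 1) u * Matrix.replicateRow (Fin 1) c, ?_, ?_⟩
  · calc (Matrix.replicateCol (Fin 1) u * Matrix.replicateRow (Fin 1) c).rank
        ≤ (Matrix.replicateCol (Fin 1) u).rank := Matrix.rank_mul_le_left _ _
      _ ≤ Fintype.card (Fin 1) := Matrix.rank_le_card_width _
      _ = 1 := by simp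
  · -- the characteristic polynomial computation
    set w : (Σ i, Fin (nn i)) → Polynomial F := fun p =>
      ((X : Polynomial F) - C (lam p.1)) ^ (p.2 : ℕ) *
        ∏ k ∈ Finset.univ.erase p.1, (X - C (lam k)) ^ (nn k) with hwdef
    have hdetA : (Matrix.charmatrix A).det = ∏ k, ((X : Polynomial F) - C (lam k)) ^ (nn k) :=
      hcharA
    have hdetne : (Matrix.charmatrix A).det ≠ 0 := by
      rw [hdetA]; exact hprodM.ne_zero
    have hwv : (Matrix.charmatrix A) *ᵥ w = fun p =>
        (∏ k, ((X : Polynomial F) - C (lam k)) ^ (nn k)) *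
          (if (p.2 : ℕ) + 1 = nn p.1 then 1 else 0) := by
      rw [hA]; exact mulVec_charmatrix_blockDiag nn lam
    have hwmul : (Matrix.charmatrix A) *ᵥ (fun p => -(w p))
        = (Matrix.charmatrix A).det • (fun p => -C (u p)) := by
      have h1 : (Matrix.charmatrix A) *ᵥ (fun p => -(w p))
          = -((Matrix.charmatrix A) *ᵥ w) := Matrix.mulVec_neg _ _
      rw [h1, hwv]
      funext p
      simp only [Pi.neg_apply, Pi.smul_apply, smul_eq_mul, hdetA, hu, mul_neg, neg_inj]
      congr 1
      rw [apply_ite C, _root_.map_one, _root_.map_zero]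
    have hdet := det_rank_one_domain (Matrix.charmatrix A) hdetne
      (fun p => -C (u p)) (fun p => C (c p)) (fun p => -(w p)) hwmul
    rw [Matrix.charpoly, charmatrix_add_rank_one, hdet, hdetA]
    -- evaluate the dot product
    have hti : ∀ i : Fin m, ∑ a : Fin (nn i),
        C ((Polynomial.taylor (lam i) (r i)).coeff (a : ℕ)) * (X - C (lam i)) ^ (a : ℕ)
          = r i := by
      intro i
      have hdeg2 : (Polynomial.taylor (lam i) (r i)).degree < (nn i : ℕ) := by
        rcases eq_or_ne (r i) 0 with h0 | h0
        · rw [h0, map_zero, Polynomial.degree_zero]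
          exact WithBot.bot_lt_coe _
        · have h1 : (Polynomial.taylor (lam i) (r i)).degree
              ≤ ((r i).natDegree : WithBot ℕ) := by
            rw [← Polynomial.natDegree_taylor (r i) (lam i)]
            exact Polynomial.degree_le_natDegree
          have h2 : (r i).degree < ((nn i : ℕ) : WithBot ℕ) := by
            have := hrdeg i (Finset.mem_univ i)
            have hchid : ((((X : Polynomial F) - C (lam i)) ^ (nn i)).degree)
                = ((nn i : ℕ) : WithBot ℕ) := by
              rw [Polynomial.degree_eq_natDegree (hchiM i).ne_zero,
                Polynomial.natDegree_pow, Polynomial.natDegree_X_sub_C, mul_one]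
            rwa [hchid] at this
          rw [Polynomial.degree_eq_natDegree h0] at h2
          exact lt_of_le_of_lt h1 h2
      rw [Polynomial.sum_fin (fun n a => C a * (X - C (lam i)) ^ n) (by simp) hdeg2]
      exact Polynomial.sum_taylor_eq (r i) (lam i)
    have hdot : (fun p => C (c p)) ⬝ᵥ (fun p => -(w p))
        = -((∏ k, ((X : Polynomial F) - C (lam k)) ^ (nn k)) - q) := by
      rw [hrsum]
      show ∑ p : Σ i, Fin (nn i), C (c p) * (-(w p)) = _
      rw [← Finset.univ_sigma_univ, Finset.sum_sigma, ← Finset.sum_neg_distrib]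
      apply Finset.sum_congr rfl
      intro i _
      rw [← hti i, Finset.sum_mul, ← Finset.sum_neg_distrib]
      apply Finset.sum_congr rfl
      intro a _
      show C (c ⟨i, a⟩) * (-(w ⟨i, a⟩)) = _
      rw [hwdef, hc]
      ring
    rw [hdot]
    ring
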